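/- One-sample null limit distribution for KL divergence: Let (S,𝒮,μ) be a probability space and let (μ_n)_{n∈ℕ} be random probability measures on S over a probability space (Ω,𝒜,ℙ) such that, almost surely, μ_n ≪ μ with density p_{μ_n} and KL(μ_n‖μ) < ∞ for all n sufficiently large, and such that ω ↦ p_{μ_n}(ω,·) is Borel measurable as a map into L²(μ). Let r_n → ∞ be a sequence of positive reals. If the L²(μ)-valued random elements r_n(p_{μ_n} − 1) converge weakly to a random element B of L²(μ), then the real random variables r_n²·KL(μ_n‖μ) converge in distribution to (1/2)∫_S B² dμ = (1/2)‖B‖²_{L²(μ)}. -/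

import Mathlib

/-!
With `z = r (p - 1)` one has `r² KL(p μ ‖ μ) = ∫ r² φ(1 + z / r) dμ` for `φ(y) = y log y`.
Since `∫ z dμ = 0`, the second-order expansion of `φ` at `1` gives
`|r² KL - ½‖z‖²| ≤ 4 ∫ min(|z| / r, 1) z² dμ` as soon as `z ≥ -r`. The right-hand side is, for
fixed `1 / r`, a continuous functional of `z ∈ L²(μ)`; it is monotone in `1 / r` and tends to `0`
as `1 / r → 0`. By the portmanteau theorem, `rₙ² KL(μₙ‖μ) - ½‖Zₙ‖²` therefore tends to `0` in
probability, while `½‖Zₙ‖² → ½‖B‖²` in distribution by the continuous mapping theorem, and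
Slutsky's theorem concludes.
-/

open MeasureTheory Filter Topology

noncomputable section

/-- Weak convergence (convergence in distribution) of random elements of a topological
space `D`: `E[f(Xₙ)] → E[f(X)]` for every bounded continuous `f : D → ℝ`. -/
def WeakConv {Ω D : Type*} [MeasurableSpace Ω] [TopologicalSpace D]
    (P : Measure Ω) (X : ℕ → Ω → D) (L : Ω → D) : Prop :=
  ∀ f : BoundedContinuousFunction D ℝ,
    Tendsto (fun n => ∫ ω, f (X n ω) ∂P) atTop (𝓝 (∫ ω, f (L ω) ∂P))

namespace Real

theorem abs_mul_log_le_one_add_sq (y : ℝ) : |y * log y| ≤ 1 + y ^ 2 := by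
  rcases eq_or_ne y 0 with rfl | hy0
  · simp
  rcases le_or_gt |y| 1 with hy | hy
  · have h := abs_log_mul_self_lt |y| (abs_pos.2 hy0) hy
    rw [log_abs, abs_mul, abs_abs, mul_comm, ← abs_mul] at h
    nlinarith [sq_nonneg y]
  · have hlog : 0 ≤ log |y| := log_nonneg hy.le
    have hle : log |y| ≤ |y| := (log_le_sub_one_of_pos (by linarith)).trans (by linarith)
    calc |y * log y| = |y| * log |y| := by rw [abs_mul, ← log_abs, abs_of_nonneg hlog]
      _ ≤ |y| * |y| := by gcongr
      _ ≤ 1 + y ^ 2 := by rw [← sq, sq_abs]; linarith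

theorem abs_one_add_mul_log_one_add_sub_le {v : ℝ} (hv : -1 ≤ v) :
    |(1 + v) * log (1 + v) - v - v ^ 2 / 2| ≤ 4 * min |v| 1 * v ^ 2 := by
  rcases le_or_gt |v| (1 / 2) with hsmall | hlarge
  · have hR : |-v + v ^ 2 / 2 + log (1 + v)| ≤ 2 * |v| ^ 3 := by
      have h := abs_log_sub_add_sum_range_le (x := -v) (by rw [abs_neg]; linarith) 2
      norm_num [Finset.sum_range_succ] at h
      refine h.trans ?_
      rw [div_le_iff₀ (by linarith)]; nlinarith [pow_nonneg (abs_nonneg v) 3]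
    have hexpand : (1 + v) * log (1 + v) - v - v ^ 2 / 2
        = -v ^ 3 / 2 + (1 + v) * (-v + v ^ 2 / 2 + log (1 + v)) := by ring
    have hv1 : |1 + v| ≤ 3 / 2 := by
      rw [abs_le]; constructor <;> linarith [abs_le.1 hsmall]
    rw [min_eq_left (by linarith), hexpand]
    calc |-v ^ 3 / 2 + (1 + v) * (-v + v ^ 2 / 2 + log (1 + v))|
        ≤ |v| ^ 3 / 2 + 3 / 2 * (2 * |v| ^ 3) := by
          refine (abs_add_le _ _).trans (add_le_add (by simp [abs_div, abs_neg, abs_pow]) ?_)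
          rw [abs_mul]; gcongr
      _ ≤ 4 * |v| * v ^ 2 := by rw [← sq_abs v]; nlinarith [pow_nonneg (abs_nonneg v) 3]
  · have h0 : 0 ≤ (1 + v) * log (1 + v) - v := by
      linarith [self_sub_one_le_mul_log (x := 1 + v) (by linarith)]
    have h1 : (1 + v) * log (1 + v) - v ≤ v ^ 2 := by
      rcases hv.eq_or_lt with rfl | hv
      · norm_num
      have := log_le_sub_one_of_pos (x := 1 + v) (by linarith)
      nlinarith
    have hmin : 1 / 2 ≤ min |v| 1 := le_min hlarge.le (by norm_num)
    rw [abs_le]; constructor <;> nlinarith [sq_nonneg v]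

end Real

namespace MeasureTheory

variable {α : Type*} [MeasurableSpace α] {μ : Measure α}

theorem tendsto_integral_abs_sub_of_tendsto_integral {G : ℕ → α → ℝ} {g : α → ℝ}
    (hG : ∀ n, Integrable (G n) μ) (hg : Integrable g μ) (hG0 : ∀ n, 0 ≤ᵐ[μ] G n)
    (hGg : ∀ᵐ a ∂μ, Tendsto (fun n => G n a) atTop (𝓝 (g a)))
    (hint : Tendsto (fun n => ∫ a, G n a ∂μ) atTop (𝓝 (∫ a, g a ∂μ))) :
    Tendsto (fun n => ∫ a, |G n a - g a| ∂μ) atTop (𝓝 0) := by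
  have hdefect_int : ∀ n, Integrable (fun a => max (g a - G n a) 0) μ :=
    fun n => (hg.sub (hG n)).pos_part
  have hdefect : Tendsto (fun n => ∫ a, max (g a - G n a) 0 ∂μ) atTop (𝓝 0) := by
    have h := tendsto_integral_of_dominated_convergence (fun a => |g a|)
      (fun n => (hdefect_int n).aestronglyMeasurable) hg.abs
      (fun n => by
        filter_upwards [hG0 n] with a (ha : 0 ≤ G n a)
        rw [Real.norm_eq_abs, abs_of_nonneg (le_max_right _ _)]
        exact max_le (by linarith [le_abs_self (g a)]) (abs_nonneg _))
      (by
        filter_upwards [hGg] with a ha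
        simpa using ((tendsto_const_nhds.sub ha).max tendsto_const_nhds))
    simpa using h
  have hsplit : ∀ n, ∫ a, |G n a - g a| ∂μ
      = (∫ a, G n a ∂μ - ∫ a, g a ∂μ) + 2 * ∫ a, max (g a - G n a) 0 ∂μ := by
    intro n
    have hpt : ∀ a, |G n a - g a| = (G n a - g a) + 2 * max (g a - G n a) 0 := fun a => by
      rcases le_total (G n a) (g a) with h | h
      · rw [abs_of_nonpos (by linarith), max_eq_left (by linarith)]; ring
      · rw [abs_of_nonneg (by linarith), max_eq_right (by linarith)]; ring
    simp_rw [hpt]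
    rw [integral_add (f := fun a => G n a - g a) ((hG n).sub hg)
        ((hdefect_int n).const_mul 2),
      integral_sub (hG n) hg, integral_const_mul]
  simp_rw [hsplit]
  simpa using ((hint.sub_const (∫ a, g a ∂μ)).add (hdefect.const_mul 2))

theorem tendsto_integral_of_abs_le_of_tendsto_integral {F : ℕ → α → ℝ} {f : α → ℝ}
    {G : ℕ → α → ℝ} {g : α → ℝ} (hF : ∀ n, AEStronglyMeasurable (F n) μ)
    (hG : ∀ n, Integrable (G n) μ) (hg : Integrable g μ) (hFG : ∀ n, ∀ᵐ a ∂μ, |F n a| ≤ G n a)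
    (hFf : ∀ᵐ a ∂μ, Tendsto (fun n => F n a) atTop (𝓝 (f a)))
    (hGg : ∀ᵐ a ∂μ, Tendsto (fun n => G n a) atTop (𝓝 (g a)))
    (hint : Tendsto (fun n => ∫ a, G n a ∂μ) atTop (𝓝 (∫ a, g a ∂μ))) :
    Tendsto (fun n => ∫ a, F n a ∂μ) atTop (𝓝 (∫ a, f a ∂μ)) := by
  -- clamp `F n` into `[-g, g]`: the clamped sequence is dominated by `|g|`, and clamping moves
  -- `F n` by at most `|G n - g|`, which tends to `0` in `L¹`
  set H : ℕ → α → ℝ := fun n a => max (min (F n a) (g a)) (-g a)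
  have hfg : ∀ᵐ a ∂μ, |f a| ≤ g a := by
    filter_upwards [ae_all_iff.2 hFG, hFf, hGg] with a hle hF hG
    exact le_of_tendsto_of_tendsto hF.abs hG (Eventually.of_forall hle)
  have hHmeas : ∀ n, AEStronglyMeasurable (H n) μ := fun n => ((hF n).inf hg.1).sup hg.1.neg
  have hHbound : ∀ n a, ‖H n a‖ ≤ |g a| := fun n a => by
    refine abs_le.2 ⟨(neg_le_neg (le_abs_self _)).trans (le_max_right _ _), ?_⟩
    exact max_le ((min_le_right _ _).trans (le_abs_self _)) (neg_le_abs _)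
  have hH : Tendsto (fun n => ∫ a, H n a ∂μ) atTop (𝓝 (∫ a, f a ∂μ)) := by
    refine tendsto_integral_of_dominated_convergence (fun a => |g a|) hHmeas hg.abs
      (fun n => Eventually.of_forall (hHbound n)) ?_
    filter_upwards [hFf, hfg] with a ha hfa
    obtain ⟨hfa₁, hfa₂⟩ := abs_le.1 hfa
    simpa [H, min_eq_left hfa₂, max_eq_left hfa₁] using
      (ha.min (tendsto_const_nhds (x := g a))).max (tendsto_const_nhds (x := -g a))
  have hFint : ∀ n, Integrable (F n) μ := fun n =>
    (hG n).mono' (hF n) ((hFG n).mono fun a ha => by rwa [Real.norm_eq_abs])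
  have hHint : ∀ n, Integrable (H n) μ := fun n =>
    hg.abs.mono' (hHmeas n) (Eventually.of_forall (hHbound n))
  have hclamp : ∀ {x y c : ℝ}, |x| ≤ y → |x - max (min x c) (-c)| ≤ |y - c| := by
    intro x y c h
    obtain ⟨h₁, h₂⟩ := abs_le.1 h
    rw [abs_le]
    constructor <;> cases abs_cases (y - c) <;> cases min_cases x c <;>
      cases max_cases (min x c) (-c) <;> linarith
  have hdiff : ∀ n, ‖∫ a, F n a ∂μ - ∫ a, H n a ∂μ‖ ≤ ∫ a, |G n a - g a| ∂μ := fun n => by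
    rw [← integral_sub (hFint n) (hHint n)]
    refine (norm_integral_le_integral_norm _).trans
      (integral_mono_ae ((hFint n).sub (hHint n)).norm ((hG n).sub hg).abs ?_)
    filter_upwards [hFG n] with a ha
    exact hclamp ha
  have hscheffe := tendsto_integral_abs_sub_of_tendsto_integral hG hg
    (fun n => (hFG n).mono fun a ha => (abs_nonneg _).trans ha) hGg hint
  simpa using hH.add (squeeze_zero_norm hdiff hscheffe)

theorem L2.norm_sq_eq_integral_sq (z : Lp ℝ 2 μ) : ‖z‖ ^ 2 = ∫ a, z a ^ 2 ∂μ := by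
  rw [← real_inner_self_eq_norm_sq, L2.inner_def]
  simp [sq]

theorem continuous_integral_comp_of_abs_le [IsFiniteMeasure μ] {h : ℝ → ℝ} (hh : Continuous h)
    {a b : ℝ} (hab : ∀ x, |h x| ≤ a + b * x ^ 2) :
    Continuous fun z : Lp ℝ 2 μ => ∫ x, h (z x) ∂μ := by
  have hbound_int : ∀ v : Lp ℝ 2 μ, Integrable (fun s => a + b * v s ^ 2) μ := fun v =>
    (integrable_const a).add ((Lp.memLp v).integrable_sq.const_mul b)
  have hbound_eq : ∀ v : Lp ℝ 2 μ, ∫ s, (a + b * v s ^ 2) ∂μ = a * μ.real Set.univ + b * ‖v‖ ^ 2 :=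
    fun v => by
      rw [integral_add (integrable_const a) ((Lp.memLp v).integrable_sq.const_mul b),
        integral_const, integral_const_mul, L2.norm_sq_eq_integral_sq, smul_eq_mul, mul_comm]
  rw [continuous_iff_seqContinuous]
  intro z w hz
  refine tendsto_of_subseq_tendsto fun ns hns => ?_
  obtain ⟨ms, hms, hae⟩ := (tendstoInMeasure_of_tendsto_Lp (hz.comp hns)).exists_seq_tendsto_ae
  have hzw : Tendsto (fun k => z (ns (ms k))) atTop (𝓝 w) := hz.comp (hns.comp hms.tendsto_atTop)
  refine ⟨ms, tendsto_integral_of_abs_le_of_tendsto_integral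
    (fun k => hh.comp_aestronglyMeasurable (Lp.aestronglyMeasurable _))
    (fun k => hbound_int _) (hbound_int w) (fun k => Eventually.of_forall fun s => hab _) ?_ ?_ ?_⟩
  · filter_upwards [hae] with s hs
    exact (hh.tendsto _).comp hs
  · filter_upwards [hae] with s hs
    exact ((hs.pow 2).const_mul b).const_add a
  · simp only [hbound_eq]
    exact ((hzw.norm.pow 2).const_mul b).const_add _

end MeasureTheory

section ScaledKL

variable {S : Type*} [MeasurableSpace S] {μ : Measure S}

/-- `r² KL(q μ ‖ μ)` as a functional of `z = r (q - 1)`. -/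
def scaledKL (r : ℝ) (z : Lp ℝ 2 μ) : ℝ :=
  ∫ s, r ^ 2 * ((1 + z s / r) * Real.log (1 + z s / r)) ∂μ

def tailEnergy (t : ℝ) (z : Lp ℝ 2 μ) : ℝ :=
  ∫ s, min (t * |z s|) 1 * z s ^ 2 ∂μ

theorem abs_min_mul_sq_le {t : ℝ} (ht : 0 ≤ t) (x : ℝ) : |min (t * |x|) 1 * x ^ 2| ≤ x ^ 2 := by
  rw [abs_mul, abs_of_nonneg (sq_nonneg x), abs_of_nonneg (le_min (by positivity) zero_le_one)]
  exact mul_le_of_le_one_left (sq_nonneg x) (min_le_right _ _)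

theorem integrable_min_mul_sq {t : ℝ} (ht : 0 ≤ t) (z : Lp ℝ 2 μ) :
    Integrable (fun s => min (t * |z s|) 1 * z s ^ 2) μ :=
  (Lp.memLp z).integrable_sq.mono' (by fun_prop (disch := exact Lp.aestronglyMeasurable z))
    (Eventually.of_forall fun s => abs_min_mul_sq_le ht _)

theorem tailEnergy_mono {s t : ℝ} (hs : 0 ≤ s) (hst : s ≤ t) (z : Lp ℝ 2 μ) :
    tailEnergy s z ≤ tailEnergy t z :=
  integral_mono (integrable_min_mul_sq hs z) (integrable_min_mul_sq (hs.trans hst) z) fun a => by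
    dsimp only
    gcongr

theorem continuous_tailEnergy [IsFiniteMeasure μ] {t : ℝ} (ht : 0 ≤ t) :
    Continuous (tailEnergy (μ := μ) t) :=
  continuous_integral_comp_of_abs_le (h := fun x => min (t * |x|) 1 * x ^ 2) (by fun_prop)
    (a := 0) (b := 1) fun x => by simpa only [zero_add, one_mul] using abs_min_mul_sq_le ht x

theorem tendsto_tailEnergy_zero (z : Lp ℝ 2 μ) :
    Tendsto (fun t => tailEnergy t z) (𝓝[≥] 0) (𝓝 0) := by
  have h := tendsto_integral_filter_of_dominated_convergence (l := 𝓝[≥] (0 : ℝ))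
    (F := fun t s => min (t * |z s|) 1 * z s ^ 2) (f := fun _ => 0) (fun s => z s ^ 2)
    (Eventually.of_forall fun t => by fun_prop (disch := exact Lp.aestronglyMeasurable z))
    (eventually_nhdsWithin_of_forall fun t (ht : 0 ≤ t) =>
      Eventually.of_forall fun s => abs_min_mul_sq_le ht _)
    (Lp.memLp z).integrable_sq
    (Eventually.of_forall fun s => by
      have : Continuous fun t : ℝ => min (t * |z s|) 1 * z s ^ 2 := by fun_prop
      simpa using (this.tendsto 0).mono_left nhdsWithin_le_nhds)
  simpa [tailEnergy] using h

theorem continuous_scaledKL [IsFiniteMeasure μ] {r : ℝ} (hr : r ≠ 0) :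
    Continuous (scaledKL (μ := μ) r) := by
  refine continuous_integral_comp_of_abs_le
    (h := fun x => r ^ 2 * ((1 + x / r) * Real.log (1 + x / r))) (by fun_prop)
    (a := 3 * r ^ 2) (b := 2) fun x => ?_
  have hy := Real.abs_mul_log_le_one_add_sq (1 + x / r)
  have hsq : (1 + x / r) ^ 2 ≤ 2 + 2 * (x / r) ^ 2 := by nlinarith [sq_nonneg (1 - x / r)]
  calc |r ^ 2 * ((1 + x / r) * Real.log (1 + x / r))|
      = r ^ 2 * |(1 + x / r) * Real.log (1 + x / r)| := by rw [abs_mul, abs_of_nonneg (sq_nonneg r)]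
    _ ≤ r ^ 2 * (3 + 2 * (x / r) ^ 2) := by gcongr; linarith
    _ = 3 * r ^ 2 + 2 * x ^ 2 := by field_simp

theorem abs_sq_mul_mul_log_sub_le {r x : ℝ} (hr : 0 < r) (hx : -r ≤ x) :
    |r ^ 2 * ((1 + x / r) * Real.log (1 + x / r)) - r * x - x ^ 2 / 2|
      ≤ 4 * (min (r⁻¹ * |x|) 1 * x ^ 2) := by
  have hv : -1 ≤ x / r := by rw [le_div_iff₀ hr]; linarith
  have hscale : r ^ 2 * ((1 + x / r) * Real.log (1 + x / r)) - r * x - x ^ 2 / 2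
      = r ^ 2 * ((1 + x / r) * Real.log (1 + x / r) - x / r - (x / r) ^ 2 / 2) := by
    field_simp
  have habs : |x / r| = r⁻¹ * |x| := by rw [abs_div, abs_of_pos hr, div_eq_inv_mul]
  rw [hscale, abs_mul, abs_of_nonneg (sq_nonneg r)]
  calc r ^ 2 * |(1 + x / r) * Real.log (1 + x / r) - x / r - (x / r) ^ 2 / 2|
      ≤ r ^ 2 * (4 * min |x / r| 1 * (x / r) ^ 2) := by
        gcongr; exact Real.abs_one_add_mul_log_one_add_sub_le hv
    _ = 4 * (min (r⁻¹ * |x|) 1 * x ^ 2) := by rw [habs]; field_simp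

theorem abs_scaledKL_sub_half_norm_sq_le [IsFiniteMeasure μ] {r : ℝ} (hr : 0 < r)
    {z : Lp ℝ 2 μ} (hz : ∀ᵐ s ∂μ, -r ≤ z s) (hmean : ∫ s, z s ∂μ = 0) :
    |scaledKL r z - 1 / 2 * ‖z‖ ^ 2| ≤ 4 * tailEnergy r⁻¹ z := by
  set q : ℝ → ℝ := fun x => r ^ 2 * ((1 + x / r) * Real.log (1 + x / r)) - r * x - x ^ 2 / 2
  have hq : ∀ᵐ s ∂μ, |q (z s)| ≤ 4 * (min (r⁻¹ * |z s|) 1 * z s ^ 2) :=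
    hz.mono fun s hs => abs_sq_mul_mul_log_sub_le hr hs
  have hqint : Integrable (fun s => q (z s)) μ :=
    ((integrable_min_mul_sq (inv_nonneg.2 hr.le) z).const_mul 4).mono'
      (by fun_prop (disch := exact Lp.aestronglyMeasurable z)) hq
  have hzint : Integrable (fun s => z s) μ := (Lp.memLp z).integrable one_le_two
  have hsqint : Integrable (fun s => z s ^ 2) μ := (Lp.memLp z).integrable_sq
  have hsplit : scaledKL r z - 1 / 2 * ‖z‖ ^ 2 = ∫ s, q (z s) ∂μ := by
    have hlin : Integrable (fun s => r * z s + z s ^ 2 / 2) μ :=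
      (hzint.const_mul r).add (hsqint.div_const 2)
    have : scaledKL r z = ∫ s, q (z s) ∂μ + ∫ s, (r * z s + z s ^ 2 / 2) ∂μ := by
      rw [← integral_add hqint hlin, scaledKL]
      congr 1 with s
      ring
    rw [this, integral_add (hzint.const_mul r) (hsqint.div_const 2), integral_const_mul, hmean,
      integral_div, L2.norm_sq_eq_integral_sq]
    ring
  rw [hsplit, tailEnergy, ← integral_const_mul]
  exact (abs_integral_le_integral_abs).trans
    (integral_mono_ae hqint.abs ((integrable_min_mul_sq (inv_nonneg.2 hr.le) z).const_mul 4) hq)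

theorem scaledKL_eq_of_ae_eq {r : ℝ} (hr : r ≠ 0) {z : Lp ℝ 2 μ} {q : S → ℝ}
    (hzq : z =ᵐ[μ] fun s => r * (q s - 1)) :
    scaledKL r z = r ^ 2 * ∫ s, q s * Real.log (q s) ∂μ := by
  rw [scaledKL, ← integral_const_mul]
  refine integral_congr_ae (hzq.mono fun s hs => ?_)
  have hq : 1 + z s / r = q s := by rw [hs]; field_simp; ring
  simp only [hq]

theorem integral_eq_one_of_isProbabilityMeasure_withDensity {q : S → ℝ}
    (hq : AEStronglyMeasurable q μ) (hq0 : ∀ᵐ s ∂μ, 0 ≤ q s)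
    [IsProbabilityMeasure (μ.withDensity fun s => ENNReal.ofReal (q s))] :
    ∫ s, q s ∂μ = 1 := by
  rw [integral_eq_lintegral_of_nonneg_ae hq0 hq, ← setLIntegral_univ, ← withDensity_apply _ .univ,
    measure_univ, ENNReal.toReal_one]

theorem abs_scaledKL_sub_half_norm_sq_le_of_density [IsProbabilityMeasure μ] {r : ℝ} (hr : 0 < r)
    {z : Lp ℝ 2 μ} {q : S → ℝ} (hzq : z =ᵐ[μ] fun s => r * (q s - 1)) (hq0 : ∀ᵐ s ∂μ, 0 ≤ q s)
    [IsProbabilityMeasure (μ.withDensity fun s => ENNReal.ofReal (q s))] :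
    |scaledKL r z - 1 / 2 * ‖z‖ ^ 2| ≤ 4 * tailEnergy r⁻¹ z := by
  have hqz : q =ᵐ[μ] fun s => 1 + z s / r :=
    hzq.mono fun s (hs : z s = r * (q s - 1)) => by simp only [hs]; field_simp; ring
  have hzint : Integrable (fun s => z s) μ := (Lp.memLp z).integrable one_le_two
  refine abs_scaledKL_sub_half_norm_sq_le hr ?_ ?_
  · filter_upwards [hzq, hq0] with s hs hs0
    rw [hs]
    nlinarith
  · have h1 := integral_eq_one_of_isProbabilityMeasure_withDensity
      ((by fun_prop (disch := exact Lp.aestronglyMeasurable z) :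
        AEStronglyMeasurable (fun s => 1 + z s / r) μ).congr hqz.symm) hq0
    rw [integral_congr_ae hqz, integral_add (integrable_const 1) (hzint.div_const r),
      integral_const, integral_div, probReal_univ, one_smul, add_eq_left,
      div_eq_zero_iff] at h1
    exact h1.resolve_right hr.ne'

end ScaledKL

section WeakConvergence

variable {Ω : Type*} [MeasurableSpace Ω] {P : Measure Ω}

theorem WeakConv.comp {D E : Type*} [TopologicalSpace D] [TopologicalSpace E]
    {X : ℕ → Ω → D} {L : Ω → D} (h : WeakConv P X L) {g : D → E} (hg : Continuous g) :
    WeakConv P (fun n ω => g (X n ω)) (fun ω => g (L ω)) :=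
  fun f => h (f.compContinuous ⟨g, hg⟩)

theorem weakConv_iff_tendstoInDistribution [IsProbabilityMeasure P] {D : Type*}
    [TopologicalSpace D] [MeasurableSpace D] [OpensMeasurableSpace D] {X : ℕ → Ω → D}
    {L : Ω → D} (hX : ∀ n, AEMeasurable (X n) P) (hL : AEMeasurable L P) :
    WeakConv P X L ↔ TendstoInDistribution X atTop L (fun _ => P) P := by
  have hmap : ∀ {Y : Ω → D}, AEMeasurable Y P → ∀ f : BoundedContinuousFunction D ℝ,
      ∫ x, f x ∂(P.map Y) = ∫ ω, f (Y ω) ∂P :=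
    fun hY f => integral_map hY f.continuous.aestronglyMeasurable
  refine ⟨fun h => ⟨hX, hL, ?_⟩, fun h f => ?_⟩
  · refine ProbabilityMeasure.tendsto_iff_forall_integral_tendsto.2 fun f => ?_
    simpa only [ProbabilityMeasure.coe_mk, hmap (hX _), hmap hL] using h f
  · simpa only [ProbabilityMeasure.coe_mk, hmap (hX _), hmap hL] using
      ProbabilityMeasure.tendsto_iff_forall_integral_tendsto.1 h.tendsto f

theorem WeakConv.tendstoInDistribution_comp [IsProbabilityMeasure P] {D : Type*}
    [TopologicalSpace D] {X : ℕ → Ω → D} {L : Ω → D} (h : WeakConv P X L)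
    (hX : ∀ n, AEStronglyMeasurable (X n) P) (hL : AEStronglyMeasurable L P) {g : D → ℝ}
    (hg : Continuous g) :
    TendstoInDistribution (fun n ω => g (X n ω)) atTop (fun ω => g (L ω)) (fun _ => P) P :=
  (weakConv_iff_tendstoInDistribution (fun n => (hg.comp_aestronglyMeasurable (hX n)).aemeasurable)
    (hg.comp_aestronglyMeasurable hL).aemeasurable).1 (h.comp hg)

theorem MeasureTheory.TendstoInDistribution.limsup_measure_preimage_le [IsProbabilityMeasure P]
    {ι D : Type*} {l : Filter ι} [TopologicalSpace D] [MeasurableSpace D] [OpensMeasurableSpace D]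
    [HasOuterApproxClosed D] {X : ι → Ω → D} {L : Ω → D}
    (h : TendstoInDistribution X l L (fun _ => P) P) {F : Set D} (hF : IsClosed F) :
    limsup (fun i => P (X i ⁻¹' F)) l ≤ P (L ⁻¹' F) := by
  simpa only [ProbabilityMeasure.coe_mk,
    Measure.map_apply_of_aemeasurable (h.forall_aemeasurable _) hF.measurableSet,
    Measure.map_apply_of_aemeasurable h.aemeasurable_limit hF.measurableSet] using
    ProbabilityMeasure.limsup_measure_closed_le_of_tendsto h.tendsto hF

theorem tendstoInMeasure_zero_of_ae_eventually_abs_le [IsProbabilityMeasure P]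
    {D : ℕ → Ω → ℝ} {U : ℕ → ℕ → Ω → ℝ} {V : ℕ → Ω → ℝ}
    (hD : ∀ n, AEStronglyMeasurable (D n) P)
    (hU : ∀ k, TendstoInDistribution (U k) atTop (V k) (fun _ => P) P)
    (hV : TendstoInMeasure P V atTop 0)
    (hDU : ∀ k, ∀ᵐ ω ∂P, ∀ᶠ n in atTop, |D n ω| ≤ U k n ω) :
    TendstoInMeasure P D atTop 0 := by
  rw [tendstoInMeasure_iff_norm] at hV ⊢
  intro δ hδ
  refine ENNReal.tendsto_nhds_zero.2 fun η hη => ?_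
  have hη2 : 0 < η / 2 := ENNReal.half_pos hη.ne'
  obtain ⟨k, hk⟩ := ((hV (δ / 2) (half_pos hδ)).eventually (gt_mem_nhds hη2)).exists
  have hUk : ∀ᶠ n in atTop, P (U k n ⁻¹' Set.Ici (δ / 2)) < η / 2 := by
    refine eventually_lt_of_limsup_lt (((hU k).limsup_measure_preimage_le isClosed_Ici).trans_lt
      ((measure_mono fun ω (hω : δ / 2 ≤ V k ω) => ?_).trans_lt hk))
    simpa using hω.trans (le_abs_self _)
  set E : ℕ → Ω → ℝ := fun n ω => max (|D n ω| - U k n ω) 0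
  have hE : TendstoInMeasure P E atTop 0 := by
    refine tendstoInMeasure_of_tendsto_ae (fun n => ?_) ?_
    · exact ((hD n).norm.sub ((hU k).forall_aemeasurable n).aestronglyMeasurable).sup
        aestronglyMeasurable_const
    · filter_upwards [hDU k] with ω hω
      exact tendsto_const_nhds.congr' (hω.mono fun n hn => (max_eq_right (by linarith)).symm)
  have hEk := ENNReal.tendsto_nhds_zero.1
    (tendstoInMeasure_iff_norm.1 hE (δ / 2) (half_pos hδ)) _ hη2
  filter_upwards [hUk, hEk] with n hUn hEn
  calc P {ω | δ ≤ ‖D n ω - (0 : Ω → ℝ) ω‖}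
      ≤ P (U k n ⁻¹' Set.Ici (δ / 2) ∪ {ω | δ / 2 ≤ ‖E n ω - (0 : Ω → ℝ) ω‖}) := by
        refine measure_mono fun ω hω => ?_
        simp only [Set.mem_ofPred_eq, Pi.zero_apply, sub_zero, Real.norm_eq_abs, Set.mem_union,
          Set.mem_preimage, Set.mem_Ici, E] at hω ⊢
        rw [abs_of_nonneg (le_max_right _ _)]
        by_contra! h
        linarith [le_max_left (|D n ω| - U k n ω) 0]
    _ ≤ η / 2 + η / 2 := (measure_union_le _ _).trans (add_le_add hUn.le hEn)
    _ = η := ENNReal.add_halves η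

end WeakConvergence

theorem kl_one_sample_null_general
    {S : Type*} [MeasurableSpace S] (μ : Measure S) [IsProbabilityMeasure μ]
    {Ω : Type*} [MeasurableSpace Ω] (P : Measure Ω) [IsProbabilityMeasure P]
    -- the random probability measures μₙ
    (ζ : ℕ → Ω → Measure S)
    (hζprob : ∀ n ω, IsProbabilityMeasure (ζ n ω))
    -- their densities with respect to μ
    (p : ℕ → Ω → S → ℝ)
    -- almost surely, for all n sufficiently large, μₙ ≪ μ with density p n and KL(μₙ‖μ) < ∞
    (hdens : ∀ᵐ ω ∂P, ∀ᶠ n in atTop,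
      ζ n ω = μ.withDensity (fun s => ENNReal.ofReal (p n ω s)) ∧
      (∀ᵐ s ∂μ, 0 ≤ p n ω s) ∧
      Integrable (fun s => p n ω s * Real.log (p n ω s)) μ)
    (r : ℕ → ℝ) (hrpos : ∀ n, 0 < r n) (hr : Tendsto r atTop atTop)
    -- the L²(μ)-valued random elements rₙ (p_{μₙ} − 1), Borel measurably chosen
    (Z : ℕ → Ω → Lp ℝ 2 μ) (B : Ω → Lp ℝ 2 μ)
    (hZmeas : ∀ n, AEStronglyMeasurable (Z n) P)
    (hBmeas : AEStronglyMeasurable B P)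
    (hZrep : ∀ n ω, (Z n ω : S → ℝ) =ᵐ[μ] fun s => r n * (p n ω s - 1))
    (hW : WeakConv P Z B) :
    WeakConv P
      (fun n ω => (r n) ^ 2 * ∫ s, p n ω s * Real.log (p n ω s) ∂μ)
      (fun ω => (1 / 2) * ‖B ω‖ ^ 2) := by
  simp only [fun n ω => (scaledKL_eq_of_ae_eq (hrpos n).ne' (hZrep n ω)).symm]
  have hA : ∀ n, AEStronglyMeasurable (fun ω => scaledKL (r n) (Z n ω)) P :=
    fun n => (continuous_scaledKL (hrpos n).ne').comp_aestronglyMeasurable (hZmeas n)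
  have hY := hW.tendstoInDistribution_comp hZmeas hBmeas
    (by fun_prop : Continuous fun z : Lp ℝ 2 μ => 1 / 2 * ‖z‖ ^ 2)
  have htail : ∀ k : ℕ, Continuous fun z : Lp ℝ 2 μ => 4 * tailEnergy ((k : ℝ) + 1)⁻¹ z :=
    fun k => (continuous_tailEnergy (by positivity)).const_mul 4
  have hV : TendstoInMeasure P (fun (k : ℕ) ω => 4 * tailEnergy ((k : ℝ) + 1)⁻¹ (B ω)) atTop 0 := by
    refine tendstoInMeasure_of_tendsto_ae
      (fun k => (htail k).comp_aestronglyMeasurable hBmeas) (Eventually.of_forall fun ω => ?_)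
    have ht : Tendsto (fun k : ℕ => ((k : ℝ) + 1)⁻¹) atTop (𝓝[≥] 0) :=
      tendsto_nhdsWithin_iff.2 ⟨tendsto_inv_atTop_zero.comp
        (tendsto_atTop_add_const_right _ 1 tendsto_natCast_atTop_atTop),
        Eventually.of_forall fun k => Set.mem_Ici.2 (by positivity)⟩
    simpa using ((tendsto_tailEnergy_zero (B ω)).comp ht).const_mul 4
  have hclose : ∀ k : ℕ, ∀ᵐ ω ∂P, ∀ᶠ n in atTop,
      |scaledKL (r n) (Z n ω) - 1 / 2 * ‖Z n ω‖ ^ 2| ≤ 4 * tailEnergy ((k : ℝ) + 1)⁻¹ (Z n ω) := by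
    intro k
    filter_upwards [hdens] with ω hω
    filter_upwards [hω, hr.eventually_ge_atTop ((k : ℝ) + 1)] with n ⟨hζ, hp0, _⟩ hrn
    have hprob := hζprob n ω
    rw [hζ] at hprob
    refine (abs_scaledKL_sub_half_norm_sq_le_of_density (hrpos n) (hZrep n ω) hp0).trans ?_
    gcongr
    exact tailEnergy_mono (inv_nonneg.2 (hrpos n).le) (inv_anti₀ (by positivity) hrn) _
  have hAY := tendstoInMeasure_zero_of_ae_eventually_abs_le
    (fun n => (hA n).sub (hY.forall_aemeasurable n).aestronglyMeasurable)
    (fun k => hW.tendstoInDistribution_comp hZmeas hBmeas (htail k)) hV hclose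
  exact (weakConv_iff_tendstoInDistribution (fun n => (hA n).aemeasurable)
    hY.aemeasurable_limit).2
    (tendstoInDistribution_of_tendstoInMeasure_sub _ _ hY hAY fun n => (hA n).aemeasurable)

/-- One-sample null limit distribution for the KL divergence:
if `rₙ (p_{μₙ} − 1) →_w B` in `L²(μ)`, then `rₙ² KL(μₙ‖μ) →_d (1/2)‖B‖²_{L²(μ)}`. -/
theorem kl_one_sample_null
    {S : Type*} [MeasurableSpace S] (μ : Measure S) [IsProbabilityMeasure μ]
    {Ω : Type*} [MeasurableSpace Ω] (P : Measure Ω) [IsProbabilityMeasure P]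
    -- the random probability measures μₙ
    (ζ : ℕ → Ω → Measure S)
    (hζprob : ∀ n ω, IsProbabilityMeasure (ζ n ω))
    (hζmeas : ∀ n, ∀ C : Set S, MeasurableSet C → Measurable (fun ω => (ζ n ω C).toReal))
    -- their densities with respect to μ
    (p : ℕ → Ω → S → ℝ)
    -- almost surely, for all n sufficiently large, μₙ ≪ μ with density p n and KL(μₙ‖μ) < ∞
    (hdens : ∀ᵐ ω ∂P, ∀ᶠ n in atTop,
      ζ n ω = μ.withDensity (fun s => ENNReal.ofReal (p n ω s)) ∧
      (∀ᵐ s ∂μ, 0 ≤ p n ω s) ∧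
      Integrable (fun s => p n ω s * Real.log (p n ω s)) μ)
    (r : ℕ → ℝ) (hrpos : ∀ n, 0 < r n) (hr : Tendsto r atTop atTop)
    -- the L²(μ)-valued random elements rₙ (p_{μₙ} − 1), Borel measurably chosen
    (Z : ℕ → Ω → Lp ℝ 2 μ) (B : Ω → Lp ℝ 2 μ)
    (hZmeas : ∀ n, AEStronglyMeasurable (Z n) P)
    (hBmeas : AEStronglyMeasurable B P)
    (hZrep : ∀ n ω, (Z n ω : S → ℝ) =ᵐ[μ] fun s => r n * (p n ω s - 1))
    (hW : WeakConv P Z B) :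
    WeakConv P
      (fun n ω => (r n) ^ 2 * ∫ s, p n ω s * Real.log (p n ω s) ∂μ)
      (fun ω => (1 / 2) * ‖B ω‖ ^ 2) :=
  kl_one_sample_null_general μ P ζ hζprob p hdens r hrpos hr Z B hZmeas hBmeas hZrep hW
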